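/- arXiv:cs/9808007 — 10 statements merged into one kernel-verified Lean document; each statement's English description precedes it below -/
import Mathlib

section
/- If a plausibility measure Pl satisfies A1 (monotonicity) and A2 (for pairwise disjoint A, B, C: Pl(A ∪ B) > Pl(C) and Pl(A ∪ C) > Pl(B) imply Pl(A) > Pl(B ∪ C)), then it satisfies A2': for all sets A, B₁, B₂, if Pl(A ∩ B₁) > Pl(A ∩ B₁ᶜ) and Pl(A ∩ B₂) > Pl(A ∩ B₂ᶜ), then Pl(A ∩ B₁ ∩ B₂) > Pl(A ∩ (B₁ ∩ B₂)ᶜ). -/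
theorem plausibility_A2_implies_A2' {Ω D : Type*} [PartialOrder D] [BoundedOrder D]
    (Pl : Set Ω → D)
    (hTop : Pl Set.univ = ⊤) (hBot : Pl (∅ : Set Ω) = ⊥)
    (A1 : ∀ A B : Set Ω, A ⊆ B → Pl A ≤ Pl B)
    (A2 : ∀ A B C : Set Ω, Disjoint A B → Disjoint A C → Disjoint B C →
      Pl C < Pl (A ∪ B) → Pl B < Pl (A ∪ C) → Pl (B ∪ C) < Pl A) :
    ∀ A B₁ B₂ : Set Ω,
      Pl (A ∩ B₁ᶜ) < Pl (A ∩ B₁) → Pl (A ∩ B₂ᶜ) < Pl (A ∩ B₂) →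
      Pl (A ∩ (B₁ ∩ B₂)ᶜ) < Pl (A ∩ B₁ ∩ B₂) := by
  intro A B₁ B₂ h1 h2
  set X := A ∩ B₁ ∩ B₂ with hX
  set Y := A ∩ B₁ ∩ B₂ᶜ with hY
  set Z := A ∩ B₁ᶜ with hZ
  have dXY : Disjoint X Y := by
    rw [Set.disjoint_left]; rintro x ⟨-, hx2⟩ ⟨-, hx2'⟩; exact hx2' hx2
  have dXZ : Disjoint X Z := by
    rw [Set.disjoint_left]; rintro x ⟨⟨-, hx1⟩, -⟩ ⟨-, hx1'⟩; exact hx1' hx1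
  have dYZ : Disjoint Y Z := by
    rw [Set.disjoint_left]; rintro x ⟨⟨-, hx1⟩, -⟩ ⟨-, hx1'⟩; exact hx1' hx1
  have hXY : X ∪ Y = A ∩ B₁ := by
    rw [hX, hY]; ext x
    simp only [Set.mem_union, Set.mem_inter_iff, Set.mem_compl_iff]; tauto
  have hYZ : Y ∪ Z = A ∩ (B₁ ∩ B₂)ᶜ := by
    rw [hY, hZ]; ext x
    simp only [Set.mem_union, Set.mem_inter_iff, Set.mem_compl_iff]; tauto
  have h1' : Pl Z < Pl (X ∪ Y) := by rw [hXY]; exact h1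
  have h2' : Pl Y < Pl (X ∪ Z) := by
    refine lt_of_le_of_lt ?_ (lt_of_lt_of_le h2 ?_)
    · exact A1 _ _ (by rw [hY]; rintro x ⟨⟨hA, -⟩, hB2⟩; exact ⟨hA, hB2⟩)
    · exact A1 _ _ (by
        rintro x ⟨hA, hB2⟩
        by_cases hB1 : x ∈ B₁
        · exact Or.inl ⟨⟨hA, hB1⟩, hB2⟩
        · exact Or.inr ⟨hA, hB1⟩)
  have := A2 X Y Z dXY dXZ dYZ h1' h2'
  rwa [hYZ] at this
end

section
/- If a plausibility measure Pl satisfies A1 and A2' (for all sets A, B₁, B₂: Pl(A ∩ B₁) > Pl(A ∩ B₁ᶜ) and Pl(A ∩ B₂) > Pl(A ∩ B₂ᶜ) imply Pl(A ∩ B₁ ∩ B₂) > Pl(A ∩ (B₁ ∩ B₂)ᶜ)), then it satisfies A2: for pairwise disjoint sets A, B, C, if Pl(A ∪ B) > Pl(C) and Pl(A ∪ C) > Pl(B), then Pl(A) > Pl(B ∪ C). -/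
theorem plausibility_A2'_implies_A2 {Ω D : Type*} [PartialOrder D] [BoundedOrder D]
    (Pl : Set Ω → D)
    (hTop : Pl Set.univ = ⊤) (hBot : Pl (∅ : Set Ω) = ⊥)
    (A1 : ∀ A B : Set Ω, A ⊆ B → Pl A ≤ Pl B)
    (A2' : ∀ A B₁ B₂ : Set Ω,
      Pl (A ∩ B₁ᶜ) < Pl (A ∩ B₁) → Pl (A ∩ B₂ᶜ) < Pl (A ∩ B₂) →
      Pl (A ∩ (B₁ ∩ B₂)ᶜ) < Pl (A ∩ B₁ ∩ B₂)) :
    ∀ A B C : Set Ω, Disjoint A B → Disjoint A C → Disjoint B C →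
      Pl C < Pl (A ∪ B) → Pl B < Pl (A ∪ C) → Pl (B ∪ C) < Pl A := by
  intro A B C hAB hAC hBC h1 h2
  have hab := Set.disjoint_left.mp hAB
  have hac := Set.disjoint_left.mp hAC
  have hbc := Set.disjoint_left.mp hBC
  have e1 : (A ∪ B ∪ C) ∩ (A ∪ B)ᶜ = C := by
    ext x
    have t1 := @hab x; have t2 := @hac x; have t3 := @hbc x
    simp only [Set.mem_inter_iff, Set.mem_union, Set.mem_compl_iff]
    tauto
  have e2 : (A ∪ B ∪ C) ∩ (A ∪ B) = A ∪ B := by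
    rw [Set.inter_eq_right.mpr]
    exact Set.subset_union_left
  have e3 : (A ∪ B ∪ C) ∩ (A ∪ C)ᶜ = B := by
    ext x
    have t1 := @hab x; have t2 := @hac x; have t3 := @hbc x
    simp only [Set.mem_inter_iff, Set.mem_union, Set.mem_compl_iff]
    tauto
  have e4 : (A ∪ B ∪ C) ∩ (A ∪ C) = A ∪ C := by
    rw [Set.inter_eq_right.mpr]
    exact fun x hx => hx.elim (fun h => Or.inl (Or.inl h)) (fun h => Or.inr h)
  have e5 : (A ∪ B ∪ C) ∩ ((A ∪ B) ∩ (A ∪ C))ᶜ = B ∪ C := by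
    ext x
    have t1 := @hab x; have t2 := @hac x; have t3 := @hbc x
    simp only [Set.mem_inter_iff, Set.mem_union, Set.mem_compl_iff, not_and_or, not_or]
    tauto
  have e6 : (A ∪ B ∪ C) ∩ (A ∪ B) ∩ (A ∪ C) = A := by
    ext x
    have t1 := @hab x; have t2 := @hac x; have t3 := @hbc x
    simp only [Set.mem_inter_iff, Set.mem_union]
    tauto
  have h := A2' (A ∪ B ∪ C) (A ∪ B) (A ∪ C) (by rwa [e1, e2]) (by rwa [e3, e4])
  rwa [e5, e6] at h
end

section
/- Every qualitative plausibility structure satisfies the AND rule: if Pl(⟦φ ∧ ψ₁⟧) > Pl(⟦φ ∧ ¬ψ₁⟧) and Pl(⟦φ ∧ ψ₂⟧) > Pl(⟦φ ∧ ¬ψ₂⟧), then Pl(⟦φ ∧ ψ₁ ∧ ψ₂⟧) > Pl(⟦φ ∧ ¬(ψ₁ ∧ ψ₂)⟧). Stated set-theoretically: for sets F, B₁, B₂, if Pl(F ∩ B₁) > Pl(F ∩ B₁ᶜ) and Pl(F ∩ B₂) > Pl(F ∩ B₂ᶜ), then Pl(F ∩ B₁ ∩ B₂) > Pl(F ∩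 (B₁ ∩ B₂)ᶜ). -/
theorem qualitative_satisfies_AND {Ω D : Type*} [PartialOrder D] [BoundedOrder D]
    (Pl : Set Ω → D)
    (hTop : Pl Set.univ = ⊤) (hBot : Pl (∅ : Set Ω) = ⊥)
    (A1 : ∀ A B : Set Ω, A ⊆ B → Pl A ≤ Pl B)
    (A2 : ∀ A B C : Set Ω, Disjoint A B → Disjoint A C → Disjoint B C →
      Pl C < Pl (A ∪ B) → Pl B < Pl (A ∪ C) → Pl (B ∪ C) < Pl A)
    (A3 : ∀ A B : Set Ω, Pl A = ⊥ → Pl B = ⊥ → Pl (A ∪ B) = ⊥) :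
    ∀ F B₁ B₂ : Set Ω,
      Pl (F ∩ B₁ᶜ) < Pl (F ∩ B₁) → Pl (F ∩ B₂ᶜ) < Pl (F ∩ B₂) →
      Pl (F ∩ (B₁ ∩ B₂)ᶜ) < Pl (F ∩ B₁ ∩ B₂) := by
  intro F B₁ B₂ h1 h2
  set A : Set Ω := F ∩ B₁ ∩ B₂ with hA
  set B : Set Ω := F ∩ B₁ ∩ B₂ᶜ with hB
  set C : Set Ω := F ∩ B₁ᶜ with hC
  have hAB : Disjoint A B := by
    rw [Set.disjoint_iff_inter_eq_empty]; ext x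
    simp [hA, hB]; try tauto
  have hAC : Disjoint A C := by
    rw [Set.disjoint_iff_inter_eq_empty]; ext x
    simp [hA, hC]; try tauto
  have hBC : Disjoint B C := by
    rw [Set.disjoint_iff_inter_eq_empty]; ext x
    simp [hB, hC]; try tauto
  have e1 : F ∩ B₁ = A ∪ B := by ext x; simp [hA, hB]; try tauto
  have e2 : F ∩ (B₁ ∩ B₂)ᶜ = B ∪ C := by ext x; simp [hB, hC]; try tauto
  have sub1 : F ∩ B₂ ⊆ A ∪ C := by intro x hx; simp only [hA, hC, Set.mem_union, Set.mem_inter_iff, Set.mem_compl_iff] at *; try tauto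
  have sub2 : B ⊆ F ∩ B₂ᶜ := by intro x hx; simp [hB] at *; try tauto
  have hcb : Pl C < Pl (A ∪ B) := by rwa [← e1]
  have hbc : Pl B < Pl (A ∪ C) :=
    lt_of_le_of_lt (A1 _ _ sub2) (lt_of_lt_of_le h2 (A1 _ _ sub1))
  have := A2 A B C hAB hAC hBC hcb hbc
  rwa [e2]
end

section
/- Every qualitative plausibility structure satisfies cautious monotonicity: for sets F, B₁, B₂, if Pl(F ∩ B₁) > Pl(F ∩ B₁ᶜ), Pl(F ∩ B₂) > Pl(F ∩ B₂ᶜ), and Pl(F ∩ B₁) > ⊥, then Pl(F ∩ B₁ ∩ B₂) > Pl(F ∩ B₁ ∩ B₂ᶜ). -/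
theorem qualitative_satisfies_CM {Ω D : Type*} [PartialOrder D] [BoundedOrder D]
    (Pl : Set Ω → D)
    (hTop : Pl Set.univ = ⊤) (hBot : Pl (∅ : Set Ω) = ⊥)
    (A1 : ∀ A B : Set Ω, A ⊆ B → Pl A ≤ Pl B)
    (A2 : ∀ A B C : Set Ω, Disjoint A B → Disjoint A C → Disjoint B C →
      Pl C < Pl (A ∪ B) → Pl B < Pl (A ∪ C) → Pl (B ∪ C) < Pl A)
    (A3 : ∀ A B : Set Ω, Pl A = ⊥ → Pl B = ⊥ → Pl (A ∪ B) = ⊥) :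
    ∀ F B₁ B₂ : Set Ω,
      Pl (F ∩ B₁ᶜ) < Pl (F ∩ B₁) → Pl (F ∩ B₂ᶜ) < Pl (F ∩ B₂) →
      ⊥ < Pl (F ∩ B₁) →
      Pl (F ∩ B₁ ∩ B₂ᶜ) < Pl (F ∩ B₁ ∩ B₂) := by
  intro F B₁ B₂ h1 h2 _
  set A := F ∩ B₁ ∩ B₂ with hA
  set B := F ∩ B₁ ∩ B₂ᶜ with hB
  set C := F ∩ B₁ᶜ with hC
  have hAB : A ∪ B = F ∩ B₁ := by
    ext x; simp [hA, hB]
  have dAB : Disjoint A B := by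
    rw [Set.disjoint_left]; rintro x ⟨_, hx⟩ ⟨_, hx'⟩; exact hx' hx
  have dAC : Disjoint A C := by
    rw [Set.disjoint_left]; rintro x ⟨⟨_, hx⟩, _⟩ ⟨_, hx'⟩; exact hx' hx
  have dBC : Disjoint B C := by
    rw [Set.disjoint_left]; rintro x ⟨⟨_, hx⟩, _⟩ ⟨_, hx'⟩; exact hx' hx
  have hc : Pl C < Pl (A ∪ B) := by rw [hAB]; exact h1
  have hb : Pl B < Pl (A ∪ C) := by
    refine lt_of_le_of_lt (A1 B (F ∩ B₂ᶜ) ?_) (lt_of_lt_of_le h2 (A1 _ _ ?_))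
    · rintro x ⟨⟨hF, _⟩, hx⟩; exact ⟨hF, hx⟩
    · rintro x ⟨hF, hx⟩
      by_cases hx1 : x ∈ B₁
      · exact Or.inl ⟨⟨hF, hx1⟩, hx⟩
      · exact Or.inr ⟨hF, hx1⟩
  have := A2 A B C dAB dAC dBC hc hb
  exact lt_of_le_of_lt (A1 B (B ∪ C) Set.subset_union_left) this
end

section
/- Every qualitative plausibility structure satisfies the OR rule: for sets F₁, F₂, B (where ⟦φᵢ⟧ = Fᵢ, ⟦ψ⟧ = B), if (Pl(F₁) = ⊥ or Pl(F₁ ∩ B) > Pl(F₁ ∩ Bᶜ)) and (Pl(F₂) = ⊥ or Pl(F₂ ∩ B) > Pl(F₂ ∩ Bᶜ)), then Pl(F₁ ∪ F₂) = ⊥ or Pl((F₁ ∪ F₂) ∩ B) > Pl((F₁ ∪ F₂) ∩ Bᶜ). -/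
private lemma or_aux {Ω D : Type*} [PartialOrder D] [BoundedOrder D]
    (Pl : Set Ω → D)
    (A1 : ∀ A B : Set Ω, A ⊆ B → Pl A ≤ Pl B)
    (A2 : ∀ A B C : Set Ω, Disjoint A B → Disjoint A C → Disjoint B C →
      Pl C < Pl (A ∪ B) → Pl B < Pl (A ∪ C) → Pl (B ∪ C) < Pl A)
    (F₁ F₂ B : Set Ω)
    (h₁ : Pl F₁ = ⊥ ∨ Pl (F₁ ∩ Bᶜ) < Pl (F₁ ∩ B))
    (h₂ : Pl (F₂ ∩ Bᶜ) < Pl (F₂ ∩ B)) :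
    Pl ((F₁ ∪ F₂) ∩ Bᶜ) < Pl ((F₁ ∪ F₂) ∩ B) := by
  set A : Set Ω := (F₁ ∪ F₂) ∩ B with hA
  set C₁ : Set Ω := (F₁ ∩ Bᶜ) \ (F₂ ∩ Bᶜ) with hC₁
  set C₂ : Set Ω := F₂ ∩ Bᶜ with hC₂
  have dAC₁ : Disjoint A C₁ := by
    apply Set.disjoint_of_subset (Set.inter_subset_right)
      (fun x hx => hx.1.2) disjoint_compl_right
  have dAC₂ : Disjoint A C₂ := by
    apply Set.disjoint_of_subset (Set.inter_subset_right)
      (Set.inter_subset_right) disjoint_compl_right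
  have dC₁C₂ : Disjoint C₁ C₂ := Set.disjoint_sdiff_left
  have hsub2 : F₂ ∩ B ⊆ A := Set.inter_subset_inter_left _ Set.subset_union_right
  have hBC : Pl C₂ < Pl (A ∪ C₁) :=
    lt_of_lt_of_le h₂ ((A1 _ _ hsub2).trans (A1 _ _ Set.subset_union_left))
  have hCB : Pl C₁ < Pl (A ∪ C₂) := by
    rcases h₁ with hb | hs
    · have h1 : Pl C₁ = ⊥ := le_antisymm
        (le_trans (A1 _ _ (fun x hx => hx.1)) (le_trans (A1 _ _ Set.inter_subset_left) hb.le))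
        bot_le
      have h2 : ⊥ < Pl (A ∪ C₂) :=
        lt_of_le_of_lt bot_le (lt_of_lt_of_le h₂
          ((A1 _ _ hsub2).trans (A1 _ _ Set.subset_union_left)))
      rwa [h1]
    · calc Pl C₁ ≤ Pl (F₁ ∩ Bᶜ) := A1 _ _ Set.diff_subset
        _ < Pl (F₁ ∩ B) := hs
        _ ≤ Pl A := A1 _ _ (Set.inter_subset_inter_left _ Set.subset_union_left)
        _ ≤ Pl (A ∪ C₂) := A1 _ _ Set.subset_union_left
  have key := A2 A C₁ C₂ dAC₁ dAC₂ dC₁C₂ hBC hCB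
  have hU : C₁ ∪ C₂ = (F₁ ∪ F₂) ∩ Bᶜ := by
    rw [hC₁, hC₂, Set.diff_union_self, Set.union_inter_distrib_right]
  rwa [hU] at key

theorem qualitative_satisfies_OR {Ω D : Type*} [PartialOrder D] [BoundedOrder D]
    (Pl : Set Ω → D)
    (hTop : Pl Set.univ = ⊤) (hBot : Pl (∅ : Set Ω) = ⊥)
    (A1 : ∀ A B : Set Ω, A ⊆ B → Pl A ≤ Pl B)
    (A2 : ∀ A B C : Set Ω, Disjoint A B → Disjoint A C → Disjoint B C →
      Pl C < Pl (A ∪ B) → Pl B < Pl (A ∪ C) → Pl (B ∪ C) < Pl A)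
    (A3 : ∀ A B : Set Ω, Pl A = ⊥ → Pl B = ⊥ → Pl (A ∪ B) = ⊥) :
    ∀ F₁ F₂ B : Set Ω,
      (Pl F₁ = ⊥ ∨ Pl (F₁ ∩ Bᶜ) < Pl (F₁ ∩ B)) →
      (Pl F₂ = ⊥ ∨ Pl (F₂ ∩ Bᶜ) < Pl (F₂ ∩ B)) →
      (Pl (F₁ ∪ F₂) = ⊥ ∨ Pl ((F₁ ∪ F₂) ∩ Bᶜ) < Pl ((F₁ ∪ F₂) ∩ B)) := by
  intro F₁ F₂ B h₁ h₂
  rcases h₂ with hb₂ | hs₂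
  · rcases h₁ with hb₁ | hs₁
    · exact Or.inl (A3 _ _ hb₁ hb₂)
    · refine Or.inr ?_
      have := or_aux Pl A1 A2 F₂ F₁ B (Or.inl hb₂) hs₁
      rwa [Set.union_comm F₂ F₁] at this
  · exact Or.inr (or_aux Pl A1 A2 F₁ F₂ B h₁ hs₂)
end

section
/- Let (W, Pl) be a qualitative plausibility space and define A <* B iff there exists C ⊆ W with A ∩ C = ∅ and Pl(A) < Pl(C) ≤ Pl(B). Then <* is irreflexive, transitive, and antisymmetric. -/
/-!
`A <* B` forces `Pl A < Pl B`, which gives irreflexivity and asymmetry. For transitivity, if `B'`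
witnesses `A <* B` and `C'` witnesses `B <* C`, then `C' \ A` witnesses `A <* C`: axiom A2 applied to
`C' \ A`, `A ∩ C'`, `B' \ C'` gives `Pl (A ∩ C') < Pl (C' \ A)`, and applied again to
`C' \ A`, `A ∩ C'`, `A \ C'` it gives `Pl A < Pl (C' \ A)`.
-/

section

variable {W D : Type*} [PartialOrder D]

/-- Axiom A2 of a qualitative plausibility measure. -/
def IsQualitative (Pl : Set W → D) : Prop :=
  ∀ A B C : Set W, Disjoint A B → Disjoint A C → Disjoint B C →
    Pl C < Pl (A ∪ B) → Pl B < Pl (A ∪ C) → Pl (B ∪ C) < Pl A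

def PlausiblyBelow (Pl : Set W → D) (A B : Set W) : Prop :=
  ∃ C : Set W, A ∩ C = ∅ ∧ Pl A < Pl C ∧ Pl C ≤ Pl B

namespace IsQualitative

variable {Pl : Set W → D} {A B C : Set W}

theorem pl_inter_lt_pl_diff (hmono : Monotone Pl) (hq : IsQualitative Pl)
    (hAB : Disjoint A B) (hAB_lt : Pl A < Pl B) (hBC : Pl B < Pl C) :
    Pl (A ∩ C) < Pl (C \ A) := by
  have hcover : C \ A ∪ A ∩ C = C := by rw [Set.inter_comm, Set.sdiff_union_inter]
  have hB_sub : B ⊆ C \ A ∪ B \ C := fun x hx ↦ by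
    by_cases hxC : x ∈ C
    · exact Or.inl ⟨hxC, hAB.notMem_of_mem_right hx⟩
    · exact Or.inr ⟨hx, hxC⟩
  have key := hq (C \ A) (A ∩ C) (B \ C)
    (Set.disjoint_sdiff_left.mono_right Set.inter_subset_left)
    (Set.disjoint_sdiff_right.mono_left Set.sdiff_subset)
    (Set.disjoint_sdiff_right.mono_left Set.inter_subset_right)
    (by rw [hcover]; exact (hmono Set.sdiff_subset).trans_lt hBC)
    ((hmono Set.inter_subset_left).trans_lt (hAB_lt.trans_le (hmono hB_sub)))
  exact (hmono Set.subset_union_left).trans_lt key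

theorem pl_lt_pl_diff (hmono : Monotone Pl) (hq : IsQualitative Pl)
    (hAC : Pl A < Pl C) (hinter : Pl (A ∩ C) < Pl (C \ A)) :
    Pl A < Pl (C \ A) := by
  have hcover : C \ A ∪ A ∩ C = C := by rw [Set.inter_comm, Set.sdiff_union_inter]
  have key := hq (C \ A) (A ∩ C) (A \ C)
    (Set.disjoint_sdiff_left.mono_right Set.inter_subset_left)
    (Set.disjoint_sdiff_left.mono_right Set.sdiff_subset)
    (Set.disjoint_sdiff_right.mono_left Set.inter_subset_right)
    (by rw [hcover]; exact (hmono Set.sdiff_subset).trans_lt hAC)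
    (hinter.trans_le (hmono Set.subset_union_left))
  rwa [Set.inter_union_sdiff] at key

end IsQualitative

namespace PlausiblyBelow

variable {Pl : Set W → D} {A B C : Set W}

theorem pl_lt (h : PlausiblyBelow Pl A B) : Pl A < Pl B :=
  let ⟨_, _, hAC, hCB⟩ := h
  hAC.trans_le hCB

theorem trans (hmono : Monotone Pl) (hq : IsQualitative Pl)
    (hAB : PlausiblyBelow Pl A B) (hBC : PlausiblyBelow Pl B C) : PlausiblyBelow Pl A C := by
  obtain ⟨B', hAB', hAB'_lt, hB'B⟩ := hAB
  obtain ⟨C', -, hBC'_lt, hC'C⟩ := hBC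
  have hB'C' : Pl B' < Pl C' := hB'B.trans_lt hBC'_lt
  have hdisj : Disjoint A B' := Set.disjoint_iff_inter_eq_empty.mpr hAB'
  refine ⟨C' \ A, Set.inter_sdiff_self A C', ?_, (hmono Set.sdiff_subset).trans hC'C⟩
  exact hq.pl_lt_pl_diff hmono (hAB'_lt.trans hB'C')
    (hq.pl_inter_lt_pl_diff hmono hdisj hAB'_lt hB'C')

end PlausiblyBelow

end

theorem ltStar_strict_order_general {W D : Type*} [PartialOrder D]
    (Pl : Set W → D)
    (A1 : ∀ A B : Set W, A ⊆ B → Pl A ≤ Pl B)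
    (A2 : ∀ A B C : Set W, Disjoint A B → Disjoint A C → Disjoint B C →
      Pl C < Pl (A ∪ B) → Pl B < Pl (A ∪ C) → Pl (B ∪ C) < Pl A)
    (ltStar : Set W → Set W → Prop)
    (hlt : ∀ A B : Set W, ltStar A B ↔ ∃ C : Set W, A ∩ C = ∅ ∧ Pl A < Pl C ∧ Pl C ≤ Pl B) :
    (∀ A : Set W, ¬ ltStar A A) ∧
    (∀ A B C : Set W, ltStar A B → ltStar B C → ltStar A C) ∧
    (∀ A B : Set W, ltStar A B → ¬ ltStar B A) := by
  have hmono : Monotone Pl := fun A B ↦ A1 A B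
  obtain rfl : ltStar = PlausiblyBelow Pl := funext₂ fun A B ↦ propext (hlt A B)
  exact ⟨fun A h ↦ h.pl_lt.false, fun A B C ↦ PlausiblyBelow.trans hmono A2,
    fun A B h h' ↦ h.pl_lt.asymm h'.pl_lt⟩

theorem ltStar_strict_order {W D : Type*} [PartialOrder D] [BoundedOrder D]
    (Pl : Set W → D)
    (hTop : Pl Set.univ = ⊤) (hBot : Pl (∅ : Set W) = ⊥)
    (A1 : ∀ A B : Set W, A ⊆ B → Pl A ≤ Pl B)
    (A2 : ∀ A B C : Set W, Disjoint A B → Disjoint A C → Disjoint B C →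
      Pl C < Pl (A ∪ B) → Pl B < Pl (A ∪ C) → Pl (B ∪ C) < Pl A)
    (A3 : ∀ A B : Set W, Pl A = ⊥ → Pl B = ⊥ → Pl (A ∪ B) = ⊥)
    (ltStar : Set W → Set W → Prop)
    (hlt : ∀ A B : Set W, ltStar A B ↔ ∃ C : Set W, A ∩ C = ∅ ∧ Pl A < Pl C ∧ Pl C ≤ Pl B) :
    (∀ A : Set W, ¬ ltStar A A) ∧
    (∀ A B C : Set W, ltStar A B → ltStar B C → ltStar A C) ∧
    (∀ A B : Set W, ltStar A B → ¬ ltStar B A) :=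
  ltStar_strict_order_general Pl A1 A2 ltStar hlt
end

section
/- Let (W, Pl) be a rational qualitative plausibility space (satisfying additionally A4 and A5) and define A <* B iff there exists C with A ∩ C = ∅ and Pl(A) < Pl(C) ≤ Pl(B). Then <* is modular: if A <* B, then for every set C, either A <* C or C <* B. -/
theorem ltStar_modular {W D : Type*} [PartialOrder D] [BoundedOrder D]
    (Pl : Set W → D)
    (hTop : Pl Set.univ = ⊤) (hBot : Pl (∅ : Set W) = ⊥)
    (A1 : ∀ A B : Set W, A ⊆ B → Pl A ≤ Pl B)
    (A2 : ∀ A B C : Set W, Disjoint A B → Disjoint A C → Disjoint B C →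
      Pl C < Pl (A ∪ B) → Pl B < Pl (A ∪ C) → Pl (B ∪ C) < Pl A)
    (A3 : ∀ A B : Set W, Pl A = ⊥ → Pl B = ⊥ → Pl (A ∪ B) = ⊥)
    (A4 : ∀ A B C : Set W, Disjoint A B → Disjoint A C → Disjoint B C →
      Pl A < Pl B → Pl A < Pl C ∨ Pl C < Pl B)
    (A5 : ∀ A B C : Set W, Disjoint A B → Disjoint A C → Disjoint B C →
      Pl A < Pl (B ∪ C) → Pl A < Pl B ∨ Pl A < Pl C)
    (ltStar : Set W → Set W → Prop)
    (hlt : ∀ A B : Set W, ltStar A B ↔ ∃ C : Set W, A ∩ C = ∅ ∧ Pl A < Pl C ∧ Pl C ≤ Pl B) :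
    ∀ A B : Set W, ltStar A B → ∀ C : Set W, ltStar A C ∨ ltStar C B := by
  intro A B hAB C
  obtain ⟨E, hAE, h1, h2⟩ := (hlt A B).mp hAB
  have hdAE : Disjoint A E := Set.disjoint_iff_inter_eq_empty.mpr hAE
  have hE : Pl A < Pl ((E \ C) ∪ (E ∩ C)) := by
    rw [Set.diff_union_inter]; exact h1
  have hdiffinter : Disjoint (E \ C) (E ∩ C) :=
    Set.disjoint_sdiff_left.mono_right Set.inter_subset_right
  rcases A5 A (E \ C) (E ∩ C) (hdAE.mono_right Set.diff_subset)
      (hdAE.mono_right Set.inter_subset_left) hdiffinter hE with hF | hI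
  · -- Pl A < Pl (E \ C)
    have hdACA : Disjoint A (C \ A) := Set.disjoint_sdiff_right
    have hdFC : Disjoint (E \ C) C := Set.disjoint_sdiff_left
    rcases A4 A (E \ C) (C \ A) (hdAE.mono_right Set.diff_subset) hdACA
        (hdFC.mono_right Set.diff_subset) hF with h | h
    · left
      exact (hlt A C).mpr ⟨C \ A, Set.inter_diff_self A C, h, A1 _ _ Set.diff_subset⟩
    · -- Pl (C \ A) < Pl (E \ C); show Pl C < Pl (E \ C) via A2
      have key : Pl ((C \ A) ∪ (C ∩ A)) < Pl (E \ C) := by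
        apply A2 (E \ C) (C \ A) (C ∩ A) (hdFC.symm.mono_left Set.diff_subset).symm
            (hdFC.symm.mono_left Set.inter_subset_left).symm
            (Set.disjoint_sdiff_left.mono_right Set.inter_subset_right)
        · exact lt_of_le_of_lt (A1 _ _ Set.inter_subset_right)
            (lt_of_lt_of_le hF (A1 _ _ Set.subset_union_left))
        · exact lt_of_lt_of_le h (A1 _ _ Set.subset_union_left)
      rw [Set.diff_union_inter] at key
      right
      refine (hlt C B).mpr ⟨E \ C, ?_, key, le_trans (A1 _ _ Set.diff_subset) h2⟩
      exact Set.disjoint_iff_inter_eq_empty.mp hdFC.symm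
  · left
    refine (hlt A C).mpr ⟨E ∩ C, ?_, hI, A1 _ _ Set.inter_subset_right⟩
    exact Set.disjoint_iff_inter_eq_empty.mp (hdAE.mono_right Set.inter_subset_left)
end

section
/- Let (W, Pl) be a rational qualitative plausibility space and define A <* B iff there exists C with A ∩ C = ∅ and Pl(A) < Pl(C) ≤ Pl(B). If A <* (A ∪ B), then not B <* (A ∪ B). -/
/-!
If `C` witnesses `A <* A ∪ B`, split `C` into its part inside `A ∪ B`, which lies in `B \ A`, and
its part outside. By A5 one of the two parts is already more plausible than `A`. For the outer part
`G`, A4 compares `B \ A` with `G`, and `Pl (B \ A) < Pl G` is impossible since A2 would then make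
`G` more plausible than `A ∪ (B \ A) = A ∪ B`. Hence `Pl A < Pl (B \ A) ≤ Pl B`, and symmetrically
`B <* A ∪ B` would give `Pl B < Pl A`.
-/

section Plausibility

variable {W D : Type*} [Preorder D] {Pl : Set W → D}

theorem lt_of_lt_of_le_union (mono : Monotone Pl)
    (A2 : ∀ A B C : Set W, Disjoint A B → Disjoint A C → Disjoint B C →
      Pl C < Pl (A ∪ B) → Pl B < Pl (A ∪ C) → Pl (B ∪ C) < Pl A)
    (A4 : ∀ A B C : Set W, Disjoint A B → Disjoint A C → Disjoint B C →
      Pl A < Pl B → Pl A < Pl C ∨ Pl C < Pl B)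
    {A E G : Set W} (hAE : Disjoint A E) (hAG : Disjoint A G) (hGE : Disjoint G E)
    (hAG_lt : Pl A < Pl G) (hG_le : Pl G ≤ Pl (A ∪ E)) : Pl A < Pl E := by
  refine (A4 A G E hAG hAE hGE hAG_lt).resolve_right fun hEG => ?_
  have hE_lt : Pl E < Pl (G ∪ A) := hEG.trans_le (mono Set.subset_union_left)
  have hA_lt : Pl A < Pl (G ∪ E) := hAG_lt.trans_le (mono Set.subset_union_left)
  exact (A2 G A E hAG.symm hGE hAE hE_lt hA_lt).not_ge hG_le

theorem lt_diff_of_lt_of_le_union (mono : Monotone Pl)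
    (A2 : ∀ A B C : Set W, Disjoint A B → Disjoint A C → Disjoint B C →
      Pl C < Pl (A ∪ B) → Pl B < Pl (A ∪ C) → Pl (B ∪ C) < Pl A)
    (A4 : ∀ A B C : Set W, Disjoint A B → Disjoint A C → Disjoint B C →
      Pl A < Pl B → Pl A < Pl C ∨ Pl C < Pl B)
    (A5 : ∀ A B C : Set W, Disjoint A B → Disjoint A C → Disjoint B C →
      Pl A < Pl (B ∪ C) → Pl A < Pl B ∨ Pl A < Pl C)
    {A B C : Set W} (hAC : Disjoint A C) (hA_lt : Pl A < Pl C) (hC_le : Pl C ≤ Pl (A ∪ B)) :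
    Pl A < Pl (B \ A) := by
  have hinner : C ∩ (A ∪ B) ⊆ B \ A := fun x ⟨hxC, hxAB⟩ =>
    have hxA : x ∉ A := fun hxA => hAC.ne_of_mem hxA hxC rfl
    ⟨hxAB.resolve_left hxA, hxA⟩
  have hsplit : Disjoint (C ∩ (A ∪ B)) (C \ (A ∪ B)) :=
    Set.disjoint_sdiff_left.symm.mono_left Set.inter_subset_right
  rw [← Set.inter_union_sdiff C (A ∪ B)] at hA_lt
  rcases A5 A _ _ (hAC.mono_right Set.inter_subset_left) (hAC.mono_right Set.sdiff_subset)
    hsplit hA_lt with hinner_lt | houter_lt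
  · exact hinner_lt.trans_le (mono hinner)
  · refine lt_of_lt_of_le_union mono A2 A4 Set.disjoint_sdiff_right
      (hAC.mono_right Set.sdiff_subset) ?_ houter_lt ?_
    · exact Set.disjoint_sdiff_left.mono_right (Set.sdiff_subset.trans Set.subset_union_right)
    · rw [Set.union_sdiff_self]
      exact (mono Set.sdiff_subset).trans hC_le

end Plausibility

theorem ltStar_union_asymm_general {W D : Type*} [PartialOrder D]
    (Pl : Set W → D)
    (A1 : ∀ A B : Set W, A ⊆ B → Pl A ≤ Pl B)
    (A2 : ∀ A B C : Set W, Disjoint A B → Disjoint A C → Disjoint B C →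
      Pl C < Pl (A ∪ B) → Pl B < Pl (A ∪ C) → Pl (B ∪ C) < Pl A)
    (A4 : ∀ A B C : Set W, Disjoint A B → Disjoint A C → Disjoint B C →
      Pl A < Pl B → Pl A < Pl C ∨ Pl C < Pl B)
    (A5 : ∀ A B C : Set W, Disjoint A B → Disjoint A C → Disjoint B C →
      Pl A < Pl (B ∪ C) → Pl A < Pl B ∨ Pl A < Pl C)
    (ltStar : Set W → Set W → Prop)
    (hlt : ∀ A B : Set W, ltStar A B ↔ ∃ C : Set W, A ∩ C = ∅ ∧ Pl A < Pl C ∧ Pl C ≤ Pl B) :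
    ∀ A B : Set W, ltStar A (A ∪ B) → ¬ ltStar B (A ∪ B) := by
  intro A B hA hB
  have mono : Monotone Pl := fun _ _ h => A1 _ _ h
  obtain ⟨C, hAC, hA_lt, hC_le⟩ := (hlt _ _).mp hA
  obtain ⟨C', hBC', hB_lt, hC'_le⟩ := (hlt _ _).mp hB
  have hAB : Pl A < Pl B := (lt_diff_of_lt_of_le_union mono A2 A4 A5
    (Set.disjoint_iff_inter_eq_empty.mpr hAC) hA_lt hC_le).trans_le (mono Set.sdiff_subset)
  have hBA : Pl B < Pl A := (lt_diff_of_lt_of_le_union mono A2 A4 A5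
    (Set.disjoint_iff_inter_eq_empty.mpr hBC') hB_lt (Set.union_comm A B ▸ hC'_le)).trans_le
    (mono Set.sdiff_subset)
  exact hAB.not_gt hBA

theorem ltStar_union_asymm {W D : Type*} [PartialOrder D] [BoundedOrder D]
    (Pl : Set W → D)
    (hTop : Pl Set.univ = ⊤) (hBot : Pl (∅ : Set W) = ⊥)
    (A1 : ∀ A B : Set W, A ⊆ B → Pl A ≤ Pl B)
    (A2 : ∀ A B C : Set W, Disjoint A B → Disjoint A C → Disjoint B C →
      Pl C < Pl (A ∪ B) → Pl B < Pl (A ∪ C) → Pl (B ∪ C) < Pl A)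
    (A3 : ∀ A B : Set W, Pl A = ⊥ → Pl B = ⊥ → Pl (A ∪ B) = ⊥)
    (A4 : ∀ A B C : Set W, Disjoint A B → Disjoint A C → Disjoint B C →
      Pl A < Pl B → Pl A < Pl C ∨ Pl C < Pl B)
    (A5 : ∀ A B C : Set W, Disjoint A B → Disjoint A C → Disjoint B C →
      Pl A < Pl (B ∪ C) → Pl A < Pl B ∨ Pl A < Pl C)
    (ltStar : Set W → Set W → Prop)
    (hlt : ∀ A B : Set W, ltStar A B ↔ ∃ C : Set W, A ∩ C = ∅ ∧ Pl A < Pl C ∧ Pl C ≤ Pl B) :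
    ∀ A B : Set W, ltStar A (A ∪ B) → ¬ ltStar B (A ∪ B) :=
  ltStar_union_asymm_general Pl A1 A2 A4 A5 ltStar hlt
end

section
/- For every rational qualitative plausibility space (W, Pl) there is a default-equivalent plausibility space (W, Pl') where Pl' is a ranking: Pl' has a totally ordered range, satisfies Pl'(A ∪ B) = max(Pl'(A), Pl'(B)), and for all disjoint A, B we have Pl(A) < Pl(B) iff Pl'(A) < Pl'(B). -/
/-!
Write `A ≺ B` for `Pl A < Pl (B \ A)`. Monotonicity (A1) makes `≺` asymmetric, and A2, A4, A5
make it negatively transitive: if `C ≺ A` but not `C ≺ B`, then splitting `A \ C` along `B`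
shows that `C`, `B \ C` and hence `B` are all less plausible than `A \ (B ∪ C)`, so `B ≺ A`.
Thus `≺` is a strict weak order, and quotienting `Set W` by incomparability gives a linear order
of ranks. The rank of `A ∪ B` is the larger of the two ranks because `(A ∪ B) \ B = A \ B`,
and on disjoint sets `A ≺ B` is just `Pl A < Pl B`.
-/

universe u v

variable {W : Type u} {D : Type v} [PartialOrder D] [OrderBot D]

theorem Set.map_union_eq_max {α : Type*} [LinearOrder α] {f : Set W → α} (hf : Monotone f)
    (hunion : ∀ A B, f A ≤ f B → f (A ∪ B) ≤ f B) (A B : Set W) :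
    f (A ∪ B) = max (f A) (f B) := by
  refine le_antisymm ?_ (max_le (hf Set.subset_union_left) (hf Set.subset_union_right))
  rcases le_total (f A) (f B) with hAB | hBA
  · exact (hunion A B hAB).trans (le_max_right _ _)
  · exact (Set.union_comm A B ▸ hunion B A hBA).trans (le_max_left _ _)

/-- The fields `monotone`, `union_lt`, `lt_or_lt` and `lt_or_lt_of_lt_union` are the paper's
axioms A1, A2, A4 and A5. -/
class IsRationalPlausibility (Pl : Set W → D) : Prop where
  map_empty : Pl ∅ = ⊥
  monotone : Monotone Pl
  union_lt : ∀ A B C : Set W, Disjoint A B → Disjoint A C → Disjoint B C →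
    Pl C < Pl (A ∪ B) → Pl B < Pl (A ∪ C) → Pl (B ∪ C) < Pl A
  lt_or_lt : ∀ A B C : Set W, Disjoint A B → Disjoint A C → Disjoint B C →
    Pl A < Pl B → Pl A < Pl C ∨ Pl C < Pl B
  lt_or_lt_of_lt_union : ∀ A B C : Set W, Disjoint A B → Disjoint A C → Disjoint B C →
    Pl A < Pl (B ∪ C) → Pl A < Pl B ∨ Pl A < Pl C

namespace IsRationalPlausibility

variable {Pl : Set W → D} [IsRationalPlausibility Pl]

theorem union_lt_of_lt_of_lt {A B C : Set W} (hAB : Disjoint A B) (hAC : Disjoint A C)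
    (hBC : Disjoint B C) (hB : Pl B < Pl A) (hC : Pl C < Pl A) : Pl (B ∪ C) < Pl A :=
  union_lt A B C hAB hAC hBC (hC.trans_le (monotone Set.subset_union_left))
    (hB.trans_le (monotone Set.subset_union_left))

theorem not_lt_diff_self (A : Set W) : ¬ Pl A < Pl (A \ A) := by
  simp [map_empty (Pl := Pl)]

theorem not_lt_diff_of_lt_diff {A B : Set W} (hAB : Pl A < Pl (B \ A)) :
    ¬ Pl B < Pl (A \ B) := fun hBA =>
  lt_irrefl _ <| (hAB.trans_le (monotone Set.sdiff_subset)).trans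
    (hBA.trans_le (monotone Set.sdiff_subset))

theorem lt_diff_or_lt_diff {A B C : Set W} (hCA : Pl C < Pl (A \ C)) :
    Pl C < Pl (B \ C) ∨ Pl B < Pl (A \ B) := by
  refine or_iff_not_imp_left.2 fun hCB => ?_
  set A₀ := A \ (B ∪ C)
  have hsplit : A \ C = A₀ ∪ (A ∩ B) \ C := by ext; simp [A₀]; tauto
  have hCA₀ : Pl C < Pl A₀ := by
    rw [hsplit] at hCA
    refine (lt_or_lt_of_lt_union C A₀ _ ?_ ?_ ?_ hCA).resolve_right fun h' =>
      hCB (h'.trans_le (monotone (Set.sdiff_subset_sdiff_left Set.inter_subset_right)))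
    all_goals rw [Set.disjoint_left]; intro x; simp [A₀]; tauto
  have hBC : Pl (B \ C) < Pl A₀ := by
    refine (lt_or_lt C A₀ (B \ C) ?_ ?_ ?_ hCA₀).resolve_left hCB
    all_goals rw [Set.disjoint_left]; intro x; simp [A₀]; tauto
  have hBiC : Pl (B ∩ C) < Pl A₀ := (monotone Set.inter_subset_right).trans_lt hCA₀
  have hB : Pl B < Pl A₀ := by
    rw [← Set.inter_union_sdiff B C]
    refine union_lt_of_lt_of_lt ?_ ?_ ?_ hBiC hBC
    all_goals rw [Set.disjoint_left]; intro x; simp [A₀]; tauto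
  exact hB.trans_le (monotone fun x hx => ⟨hx.1, fun hxB => hx.2 (Or.inl hxB)⟩)

end IsRationalPlausibility

def RankedSets (_Pl : Set W → D) : Type u := Set W

namespace RankedSets

variable (Pl : Set W → D) [IsRationalPlausibility Pl]

def of : Set W → RankedSets Pl := id

instance : Preorder (RankedSets Pl) where
  le A B := ¬ Pl (B : Set W) < Pl ((A : Set W) \ B)
  lt A B := Pl (A : Set W) < Pl ((B : Set W) \ A)
  le_refl A := IsRationalPlausibility.not_lt_diff_self A
  le_trans _ _ _ hAB hBC hCA :=
    (IsRationalPlausibility.lt_diff_or_lt_diff hCA).elim hBC hAB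
  lt_iff_le_not_ge _ _ := ⟨fun h => ⟨IsRationalPlausibility.not_lt_diff_of_lt_diff h, not_not.2 h⟩,
    fun h => not_not.1 h.2⟩

variable {Pl}

theorem of_le_of {A B : Set W} : of Pl A ≤ of Pl B ↔ ¬ Pl B < Pl (A \ B) := Iff.rfl

theorem of_lt_of {A B : Set W} : of Pl A < of Pl B ↔ Pl A < Pl (B \ A) := Iff.rfl

instance : @Std.Total (RankedSets Pl) (· ≤ ·) where
  total A B := (em (Pl (A : Set W) < Pl ((B : Set W) \ A))).imp
    IsRationalPlausibility.not_lt_diff_of_lt_diff id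

theorem of_le_of_subset {A B : Set W} (h : A ⊆ B) : of Pl A ≤ of Pl B := by
  simp [of_le_of, Set.sdiff_eq_empty.2 h, IsRationalPlausibility.map_empty]

theorem of_union_le_of {A B : Set W} (h : of Pl A ≤ of Pl B) : of Pl (A ∪ B) ≤ of Pl B := by
  rwa [of_le_of, Set.union_sdiff_right]

variable (Pl) in
def rank (A : Set W) : Antisymmetrization (RankedSets Pl) (· ≤ ·) :=
  toAntisymmetrization (· ≤ ·) (of Pl A)

theorem rank_mono : Monotone (rank Pl) := fun _ _ h => of_le_of_subset h

theorem rank_union_le {A B : Set W} (h : rank Pl A ≤ rank Pl B) : rank Pl (A ∪ B) ≤ rank Pl B :=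
  of_union_le_of h

theorem rank_lt_rank_iff {A B : Set W} (h : Disjoint A B) : rank Pl A < rank Pl B ↔ Pl A < Pl B := by
  rw [rank, rank, toAntisymmetrization_lt_toAntisymmetrization_iff, of_lt_of, h.symm.sdiff_eq_left]

end RankedSets

theorem rational_default_equivalent_ranking_general {W : Type u} {D : Type v}
    [PartialOrder D] [BoundedOrder D]
    (Pl : Set W → D)
    (hBot : Pl (∅ : Set W) = ⊥)
    (A1 : ∀ A B : Set W, A ⊆ B → Pl A ≤ Pl B)
    (A2 : ∀ A B C : Set W, Disjoint A B → Disjoint A C → Disjoint B C →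
      Pl C < Pl (A ∪ B) → Pl B < Pl (A ∪ C) → Pl (B ∪ C) < Pl A)
    (A4 : ∀ A B C : Set W, Disjoint A B → Disjoint A C → Disjoint B C →
      Pl A < Pl B → Pl A < Pl C ∨ Pl C < Pl B)
    (A5 : ∀ A B C : Set W, Disjoint A B → Disjoint A C → Disjoint B C →
      Pl A < Pl (B ∪ C) → Pl A < Pl B ∨ Pl A < Pl C) :
    ∃ (D' : Type (max u v)) (_ : LinearOrder D') (Pl' : Set W → D'),
      (∀ A B : Set W, Pl' (A ∪ B) = max (Pl' A) (Pl' B)) ∧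
      (∀ A B : Set W, Disjoint A B → (Pl A < Pl B ↔ Pl' A < Pl' B)) := by
  classical
  have : IsRationalPlausibility Pl := ⟨hBot, A1, A2, A4, A5⟩
  let Pl' : Set W → ULift.{v} (Antisymmetrization (RankedSets Pl) (· ≤ ·)) :=
    fun A => ULift.up (RankedSets.rank Pl A)
  refine ⟨_, inferInstance, Pl', Set.map_union_eq_max (f := Pl') ?_ ?_,
    fun A B h => (RankedSets.rank_lt_rank_iff h).symm⟩
  · exact fun _ _ h => RankedSets.rank_mono h
  · exact fun _ _ h => RankedSets.rank_union_le h

theorem rational_default_equivalent_ranking {W : Type u} {D : Type v}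
    [PartialOrder D] [BoundedOrder D]
    (Pl : Set W → D)
    (hTop : Pl Set.univ = ⊤) (hBot : Pl (∅ : Set W) = ⊥)
    (A1 : ∀ A B : Set W, A ⊆ B → Pl A ≤ Pl B)
    (A2 : ∀ A B C : Set W, Disjoint A B → Disjoint A C → Disjoint B C →
      Pl C < Pl (A ∪ B) → Pl B < Pl (A ∪ C) → Pl (B ∪ C) < Pl A)
    (A3 : ∀ A B : Set W, Pl A = ⊥ → Pl B = ⊥ → Pl (A ∪ B) = ⊥)
    (A4 : ∀ A B C : Set W, Disjoint A B → Disjoint A C → Disjoint B C →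
      Pl A < Pl B → Pl A < Pl C ∨ Pl C < Pl B)
    (A5 : ∀ A B C : Set W, Disjoint A B → Disjoint A C → Disjoint B C →
      Pl A < Pl (B ∪ C) → Pl A < Pl B ∨ Pl A < Pl C) :
    ∃ (D' : Type (max u v)) (_ : LinearOrder D') (Pl' : Set W → D'),
      (∀ A B : Set W, Pl' (A ∪ B) = max (Pl' A) (Pl' B)) ∧
      (∀ A B : Set W, Disjoint A B → (Pl A < Pl B ↔ Pl' A < Pl' B)) :=
  rational_default_equivalent_ranking_general Pl hBot A1 A2 A4 A5
end

section
/- There is a qualitative plausibility measure on a three-element set {a, b, c} whose values are totally ordered, with Pl({c}) < Pl({a, b}), but neither Pl({c}) < Pl({a}) nor Pl({c}) < Pl({b}); concretely, Pl(∅) = 0, Pl({a}) = Pl({b}) = Pl({c}) = Pl({b,c}) = Pl({a,c}) = 1/2, Pl({a,b}) = Pl({a,b,c}) = 1 defines such a measure and it satisfies A1, A2, A3. -/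
open scoped Classical

noncomputable def myPl (A : Set (Fin 3)) : ℝ :=
  if A = ∅ then 0 else if ({0,1} : Set (Fin 3)) ⊆ A then 1 else 1/2

lemma myPl_empty : myPl ∅ = 0 := by simp [myPl]

lemma myPl_one {A : Set (Fin 3)} (h : ({0,1} : Set (Fin 3)) ⊆ A) : myPl A = 1 := by
  have hne : A ≠ ∅ := fun he => by
    have := h (by simp : (0 : Fin 3) ∈ ({0,1} : Set (Fin 3)))
    simp [he] at this
  simp [myPl, hne, h]

lemma myPl_mid {A : Set (Fin 3)} (hne : A ≠ ∅) (h : ¬ ({0,1} : Set (Fin 3)) ⊆ A) :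
    myPl A = 1/2 := by simp [myPl, hne, h]

lemma myPl_ge_half {A : Set (Fin 3)} (hne : A ≠ ∅) : 1/2 ≤ myPl A := by
  by_cases h : ({0,1} : Set (Fin 3)) ⊆ A
  · rw [myPl_one h]; norm_num
  · rw [myPl_mid hne h]

lemma myPl_le_one (A : Set (Fin 3)) : myPl A ≤ 1 := by
  unfold myPl; split <;> [norm_num; (split <;> norm_num)]

lemma myPl_lt_one {A : Set (Fin 3)} (h : ¬ ({0,1} : Set (Fin 3)) ⊆ A) : myPl A < 1 := by
  by_cases hne : A = ∅
  · rw [hne, myPl_empty]; norm_num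
  · rw [myPl_mid hne h]; norm_num

lemma myPl_le_half {A : Set (Fin 3)} (h : ¬ ({0,1} : Set (Fin 3)) ⊆ A) : myPl A ≤ 1/2 := by
  by_cases hne : A = ∅
  · rw [hne, myPl_empty]; norm_num
  · rw [myPl_mid hne h]

lemma myPl_subset01 {A : Set (Fin 3)} (h : 1 ≤ myPl A) : ({0,1} : Set (Fin 3)) ⊆ A := by
  by_contra hc
  exact absurd h (not_le.mpr (myPl_lt_one hc))

theorem exists_totally_ordered_qualitative_counterexample :
    ∃ Pl : Set (Fin 3) → ℝ,
      Pl (∅ : Set (Fin 3)) = 0 ∧ Pl Set.univ = 1 ∧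
      Pl {0} = 1/2 ∧ Pl {1} = 1/2 ∧ Pl {2} = 1/2 ∧
      Pl {1, 2} = 1/2 ∧ Pl {0, 2} = 1/2 ∧ Pl {0, 1} = 1 ∧
      (∀ A B : Set (Fin 3), A ⊆ B → Pl A ≤ Pl B) ∧
      (∀ A B C : Set (Fin 3), Disjoint A B → Disjoint A C → Disjoint B C →
        Pl C < Pl (A ∪ B) → Pl B < Pl (A ∪ C) → Pl (B ∪ C) < Pl A) ∧
      (∀ A B : Set (Fin 3), Pl A = 0 → Pl B = 0 → Pl (A ∪ B) = 0) ∧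
      Pl {2} < Pl {0, 1} ∧ ¬ (Pl {2} < Pl {0}) ∧ ¬ (Pl {2} < Pl {1}) := by
  refine ⟨myPl, myPl_empty, myPl_one (Set.subset_univ _), ?_, ?_, ?_, ?_, ?_,
    myPl_one (by norm_num), ?_, ?_, ?_, ?_, ?_, ?_⟩
  · exact myPl_mid (by simp) (fun h => by have := h (by simp : (1:Fin 3) ∈ _); simp at this)
  · exact myPl_mid (by simp) (fun h => by have := h (by simp : (0:Fin 3) ∈ _); simp at this)
  · exact myPl_mid ((Set.singleton_nonempty _).ne_empty) (fun h => by have := h (by simp : (0:Fin 3) ∈ _); simp at this)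
  · exact myPl_mid ((Set.insert_nonempty _ _).ne_empty) (fun h => by have := h (by simp : (0:Fin 3) ∈ _); simp at this)
  · exact myPl_mid ((Set.insert_nonempty _ _).ne_empty) (fun h => by have := h (by simp : (1:Fin 3) ∈ _); simp at this)
  · -- monotone
    intro A B hAB
    by_cases hA : A = ∅
    · rw [hA, myPl_empty]
      by_cases hB : B = ∅
      · rw [hB, myPl_empty]
      · linarith [myPl_ge_half hB]
    · by_cases h01 : ({0,1} : Set (Fin 3)) ⊆ A
      · rw [myPl_one h01, myPl_one (h01.trans hAB)]
      · rw [myPl_mid hA h01]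
        have hB : B ≠ ∅ := fun he => hA (Set.subset_eq_empty hAB he ▸ rfl)
        exact myPl_ge_half hB
  · -- A2
    intro A B C hAB hAC hBC h1 h2
    by_cases hA : A = ∅
    · subst hA
      simp only [Set.empty_union] at h1 h2
      linarith
    by_cases h01 : ({0,1} : Set (Fin 3)) ⊆ A
    · -- Pl A = 1; B ∪ C can't contain 0
      rw [myPl_one h01]
      refine myPl_lt_one (fun h => ?_)
      have h0 : (0 : Fin 3) ∈ B ∪ C := h (by simp)
      have h0A : (0 : Fin 3) ∈ A := h01 (by simp)
      rcases h0 with h0 | h0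
      · exact (Set.disjoint_left.mp hAB h0A) h0
      · exact (Set.disjoint_left.mp hAC h0A) h0
    · -- Pl A = 1/2; show B = C = ∅
      rw [myPl_mid hA h01]
      have hC : C = ∅ := by
        by_contra hC
        have hsub1 : ({0,1} : Set (Fin 3)) ⊆ A ∪ B := by
          by_contra hc
          linarith [myPl_ge_half hC, myPl_le_half hc]
        have hB : B ≠ ∅ := by
          intro hB
          rw [hB, Set.union_empty] at hsub1
          exact h01 hsub1
        have hsub2 : ({0,1} : Set (Fin 3)) ⊆ A ∪ C := by
          by_contra hc
          linarith [myPl_ge_half hB, myPl_le_half hc]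
        -- some x ∈ {0,1} with x ∉ A
        obtain ⟨x, hx01, hxA⟩ : ∃ x, x ∈ ({0,1} : Set (Fin 3)) ∧ x ∉ A := by
          by_contra hc
          push_neg at hc
          exact h01 hc
        have hxB : x ∈ B := (hsub1 hx01).resolve_left hxA
        have hxC : x ∈ C := (hsub2 hx01).resolve_left hxA
        exact (Set.disjoint_left.mp hBC hxB) hxC
      have hB : B = ∅ := by
        by_contra hB
        rw [hC, Set.union_empty, myPl_mid hA h01] at h2
        linarith [myPl_ge_half hB]
      rw [hB, hC, Set.union_empty, myPl_empty]
      norm_num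
  · -- A3
    intro A B hA hB
    have hA' : A = ∅ := by
      by_contra h
      have := myPl_ge_half h
      rw [hA] at this; linarith
    have hB' : B = ∅ := by
      by_contra h
      have := myPl_ge_half h
      rw [hB] at this; linarith
    rw [hA', hB', Set.union_empty, myPl_empty]
  · rw [myPl_mid (by simp) (fun h => by have := h (by simp : (0:Fin 3) ∈ _); simp at this),
      myPl_one (by norm_num)]
    norm_num
  · rw [myPl_mid (by simp) (fun h => by have := h (by simp : (0:Fin 3) ∈ _); simp at this),
      myPl_mid (by simp) (fun h => by have := h (by simp : (1:Fin 3) ∈ _); simp at this)]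
    simp
  · rw [myPl_mid (by simp) (fun h => by have := h (by simp : (0:Fin 3) ∈ _); simp at this),
      myPl_mid (by simp) (fun h => by have := h (by simp : (0:Fin 3) ∈ _); simp at this)]
    simp
end
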